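/- arXiv:2504.05721 — 10 statements merged into one kernel-verified Lean document; each statement's English description precedes it below -/
import Mathlib

section
/- If (α, β) is a two-fold semi-morphism of a finite graph Γ, then for any two distinct vertices u, v of Γ, u is adjacent to v if and only if u^α = v^β or u^α is adjacent to v^β. -/
def IsTF {V : Type*} (G : SimpleGraph V) (α β : Equiv.Perm V) : Prop :=
  ∀ u v : V, G.Adj u v → G.Adj (α u) (β v)

def IsTFS {V : Type*} (G : SimpleGraph V) (α β : Equiv.Perm V) : Prop :=
  (∀ u : V, G.Adj (α u) (β u)) ∧
    ∀ u v : V, G.Adj u v → G.Adj (α u) (β v) ∨ α u = β v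

/- A TFS-morphism maps the relation `u = v ∨ u ~ v` into itself under `(u, v) ↦ (u^α, v^β)`.
On a finite vertex set this injective map of pairs must then be a bijection of the related
pairs, so it also reflects the relation; for distinct `u, v` that is the claimed equivalence. -/

theorem Equiv.Perm.rel_apply_iff_of_mapsTo {V : Type*} [Finite V] {R : V → V → Prop}
    (α β : Equiv.Perm V) (hR : ∀ u v, R u v → R (α u) (β v)) (u v : V) :
    R (α u) (β v) ↔ R u v := by
  refine ⟨fun huv => ?_, hR u v⟩
  let S : Set (V × V) := {p | R p.1 p.2}
  have hmaps : Set.MapsTo (Prod.map α β) S S := fun p hp => hR p.1 p.2 hp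
  have hinj : Function.Injective (Prod.map α β) := α.injective.prodMap β.injective
  have hsurj : Set.SurjOn (Prod.map α β) S S :=
    ((S.toFinite.injOn_iff_bijOn_of_mapsTo hmaps).1 hinj.injOn).surjOn
  obtain ⟨p, hp, hpuv⟩ := hsurj (show (α u, β v) ∈ S from huv)
  obtain rfl : p = (u, v) := hinj hpuv
  exact hp

theorem IsTFS.eq_or_adj_apply {V : Type*} {G : SimpleGraph V} {α β : Equiv.Perm V}
    (h : IsTFS G α β) (u v : V) (huv : u = v ∨ G.Adj u v) :
    α u = β v ∨ G.Adj (α u) (β v) := by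
  rcases huv with rfl | hadj
  · exact Or.inr (h.1 u)
  · exact (h.2 u v hadj).symm

theorem stmt0 {V : Type*} [Fintype V] (G : SimpleGraph V) (α β : Equiv.Perm V)
    (h : IsTFS G α β) :
    ∀ u v : V, u ≠ v → (G.Adj u v ↔ α u = β v ∨ G.Adj (α u) (β v)) := by
  intro u v huv
  rw [α.rel_apply_iff_of_mapsTo (R := fun a b => a = b ∨ G.Adj a b) β h.eq_or_adj_apply]
  simp only [huv, false_or]
end

section
/- Let α and β be permutations of the vertex set of a finite graph Γ. Then (α, β) is a TFS-morphism of Γ if and only if αβ⁻¹ is a derangement (fixes no vertex) and (α, β) is a TF-morphism of the complement graph of Γ. -/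
/-!
Encode a pair of permutations `(α, β)` as the permutation `(u, v) ↦ (α u, β v)` of `V × V`.
Being a TF-morphism of `Gᶜ` says that this permutation maps the set of non-adjacent distinct
pairs into itself, while being a TFS-morphism of `G` says (once `α u ≠ β u` is split off) that it
maps the complementary set, adjacent or equal pairs, into itself. On a finite type an injective
self-map preserves a subset iff it preserves its complement.
-/

theorem Function.Injective.mapsTo_compl {W : Type*} [Finite W] {f : W → W}
    (hf : Function.Injective f) {s : Set W} (h : Set.MapsTo f s s) :
    Set.MapsTo f sᶜ sᶜ :=
  ((s.toFinite.injOn_iff_bijOn_of_mapsTo h).1 hf.injOn).surjOn.mapsTo_compl hf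

theorem Function.Injective.mapsTo_compl_iff {W : Type*} [Finite W] {f : W → W}
    (hf : Function.Injective f) {s : Set W} :
    Set.MapsTo f sᶜ sᶜ ↔ Set.MapsTo f s s :=
  ⟨fun h => by simpa using hf.mapsTo_compl h, hf.mapsTo_compl⟩

section

variable {V : Type*} (G : SimpleGraph V) (α β : Equiv.Perm V)

theorem isTF_iff_mapsTo :
    IsTF G α β ↔
      Set.MapsTo (α.prodCongr β) {p | G.Adj p.1 p.2} {p | G.Adj p.1 p.2} :=
  ⟨fun h p hp => h p.1 p.2 hp, fun h u v huv => h (x := (u, v)) huv⟩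

theorem isTFS_iff_forall_ne_and_mapsTo :
    IsTFS G α β ↔
      (∀ u, α u ≠ β u) ∧
        Set.MapsTo (α.prodCongr β) {p | Gᶜ.Adj p.1 p.2}ᶜ {p | Gᶜ.Adj p.1 p.2}ᶜ := by
  have hmem : ∀ p : V × V, p ∈ {p : V × V | Gᶜ.Adj p.1 p.2}ᶜ ↔ G.Adj p.1 p.2 ∨ p.1 = p.2 := by
    intro p
    simp only [Set.mem_compl_iff, Set.mem_ofPred_eq, SimpleGraph.compl_adj]
    tauto
  simp only [Set.MapsTo, hmem, Equiv.prodCongr_apply, Prod.map_fst, Prod.map_snd, Prod.forall]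
  constructor
  · rintro ⟨hdiag, hadj⟩
    refine ⟨fun u => (hdiag u).ne, fun u v huv => ?_⟩
    rcases huv with huv | rfl
    exacts [hadj u v huv, Or.inl (hdiag u)]
  · rintro ⟨hne, hmaps⟩
    refine ⟨fun u => (hmaps u u (Or.inr rfl)).resolve_right (hne u),
      fun u v huv => hmaps u v (Or.inl huv)⟩

theorem forall_mul_inv_apply_ne_iff :
    (∀ u, (α * β⁻¹) u ≠ u) ↔ ∀ u, α u ≠ β u := by
  refine (β.forall_congr fun {u} => ?_).symm
  simp [Equiv.Perm.mul_apply]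

end

theorem stmt2 {V : Type*} [Fintype V] (G : SimpleGraph V) (α β : Equiv.Perm V) :
    IsTFS G α β ↔ ((∀ u : V, (α * β⁻¹) u ≠ u) ∧ IsTF Gᶜ α β) := by
  rw [isTFS_iff_forall_ne_and_mapsTo, isTF_iff_mapsTo, forall_mul_inv_apply_ne_iff,
    (α.prodCongr β).injective.mapsTo_compl_iff]
end

section
/- Let Γ and Σ be finite graphs without isolated vertices. The Cartesian product Γ □ Σ is R-thick (has two distinct vertices with equal neighbourhoods) if and only if it contains a connected component which is a 4-cycle. -/
/-!
If `(a, x)` and `(b, y)` are distinct vertices of `G □ H` with the same neighbourhood, then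
`a ≠ b` and `x ≠ y`, since a neighbour of `(a, x)` moved in the factor where the two agree
could not reach the other vertex in one step. The neighbours `(c, x)` of `(a, x)` then force
`c = b`, so `{a, b}` is a component `K₂` of `G`, and likewise `{x, y}` is a component `K₂` of
`H`; their product is a 4-cycle component. Conversely, opposite vertices of a 4-cycle component
are twins.
-/

def RThick {V : Type*} (G : SimpleGraph V) : Prop :=
  ∃ u v : V, u ≠ v ∧ G.neighborSet u = G.neighborSet v

/-- `G` has a connected component which is a 4-cycle: there are four distinct vertices
each of whose neighbourhood consists exactly of its two neighbours on the cycle. -/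
def HasC4Component {V : Type*} (G : SimpleGraph V) : Prop :=
  ∃ a b c d : V, a ≠ b ∧ a ≠ c ∧ a ≠ d ∧ b ≠ c ∧ b ≠ d ∧ c ≠ d ∧
    (∀ x, G.Adj a x ↔ x = b ∨ x = d) ∧
    (∀ x, G.Adj b x ↔ x = a ∨ x = c) ∧
    (∀ x, G.Adj c x ↔ x = b ∨ x = d) ∧
    (∀ x, G.Adj d x ↔ x = a ∨ x = c)

theorem HasC4Component.rThick {V : Type*} {G : SimpleGraph V} (h : HasC4Component G) :
    RThick G := by
  obtain ⟨a, _, c, _, -, hac, -, -, -, -, ha, -, hc, -⟩ := h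
  exact ⟨a, c, hac, Set.ext fun p => (ha p).trans (hc p).symm⟩

namespace SimpleGraph

variable {V W : Type*} {G : SimpleGraph V} {H : SimpleGraph W} {a b c : V} {x y : W}

theorem boxProd_neighborSet_swap
    (h : (G □ H).neighborSet (a, x) = (G □ H).neighborSet (b, y)) :
    (H □ G).neighborSet (x, a) = (H □ G).neighborSet (y, b) := by
  ext ⟨z, c⟩
  have hcz := Set.ext_iff.mp h (c, z)
  simp only [mem_neighborSet, boxProd_adj] at hcz ⊢
  tauto

theorem boxProd_eq_of_twins_of_adj_fst
    (h : (G □ H).neighborSet (a, x) = (G □ H).neighborSet (b, y)) (hxy : x ≠ y)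
    (hac : G.Adj a c) : c = b := by
  have hcx : (c, x) ∈ (G □ H).neighborSet (b, y) := h ▸ boxProd_adj_left.mpr hac
  simp only [mem_neighborSet, boxProd_adj] at hcx
  rcases hcx with ⟨-, hyx⟩ | ⟨-, hbc⟩
  · exact absurd hyx.symm hxy
  · exact hbc.symm

theorem boxProd_adj_fst_iff_of_twins
    (h : (G □ H).neighborSet (a, x) = (G □ H).neighborSet (b, y)) (hxy : x ≠ y)
    (ha : ∃ c, G.Adj a c) (c : V) : G.Adj a c ↔ c = b := by
  refine ⟨boxProd_eq_of_twins_of_adj_fst h hxy, ?_⟩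
  rintro rfl
  obtain ⟨d, hd⟩ := ha
  exact boxProd_eq_of_twins_of_adj_fst h hxy hd ▸ hd

theorem boxProd_snd_eq_of_twins_of_fst_eq
    (h : (G □ H).neighborSet (a, x) = (G □ H).neighborSet (b, y)) (hab : a = b)
    (ha : ∃ c, G.Adj a c) : x = y := by
  by_contra hxy
  obtain ⟨c, hc⟩ := ha
  exact hc.ne (hab.trans (boxProd_eq_of_twins_of_adj_fst h hxy hc).symm)

theorem hasC4Component_boxProd (ha : ∀ c, G.Adj a c ↔ c = b) (hb : ∀ c, G.Adj b c ↔ c = a)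
    (hx : ∀ z, H.Adj x z ↔ z = y) (hy : ∀ z, H.Adj y z ↔ z = x) :
    HasC4Component (G □ H) := by
  have hab : a ≠ b := ((ha b).mpr rfl).ne
  have hxy : x ≠ y := ((hx y).mpr rfl).ne
  refine ⟨(a, x), (b, x), (b, y), (a, y), by simp [hab], by simp [hab], by simp [hxy],
    by simp [hxy], by simp [hxy], by simp [hab.symm], ?_, ?_, ?_, ?_⟩
  all_goals
    rintro ⟨c, z⟩
    simp only [boxProd_adj, ha, hb, hx, hy, Prod.mk.injEq]
    grind

end SimpleGraph

open SimpleGraph in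
theorem stmt3_general {V W : Type*}
    (G : SimpleGraph V) (H : SimpleGraph W)
    (hG : ∀ v : V, ∃ u, G.Adj v u) (hH : ∀ x : W, ∃ y, H.Adj x y) :
    RThick (G □ H) ↔ HasC4Component (G □ H) := by
  refine ⟨?_, HasC4Component.rThick⟩
  rintro ⟨⟨a, x⟩, ⟨b, y⟩, hne, h⟩
  have h' := boxProd_neighborSet_swap h
  have hab : a ≠ b := fun hab =>
    hne (Prod.ext hab (boxProd_snd_eq_of_twins_of_fst_eq h hab (hG a)))
  have hxy : x ≠ y := fun hxy =>
    hne (Prod.ext (boxProd_snd_eq_of_twins_of_fst_eq h' hxy (hH x)) hxy)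
  exact hasC4Component_boxProd
    (boxProd_adj_fst_iff_of_twins h hxy (hG a))
    (boxProd_adj_fst_iff_of_twins h.symm hxy.symm (hG b))
    (boxProd_adj_fst_iff_of_twins h' hab (hH x))
    (boxProd_adj_fst_iff_of_twins h'.symm hab.symm (hH y))

theorem stmt3 {V W : Type*} [Fintype V] [Fintype W]
    (G : SimpleGraph V) (H : SimpleGraph W)
    (hG : ∀ v : V, ∃ u, G.Adj v u) (hH : ∀ x : W, ∃ y, H.Adj x y) :
    RThick (G □ H) ↔ HasC4Component (G □ H) :=
  stmt3_general G H hG hH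
end

section
/- Let Γ and Σ be finite connected graphs without isolated vertices. Then Γ □ Σ is R-thick if and only if both Γ and Σ are isomorphic to K₂. -/
namespace SimpleGraph

variable {V W : Type*} {G : SimpleGraph V} {H : SimpleGraph W} {a b : V} {x y : W}

lemma neighborSet_eq_singleton_of_forall_eq_or_eq (hab : G.Adj a b)
    (hall : ∀ v, v = a ∨ v = b) : G.neighborSet a = {b} := by
  ext c
  rcases hall c with rfl | rfl
  · simpa using hab.ne
  · simpa using hab

lemma Preconnected.forall_eq_or_eq_of_neighborSet_subset (hG : G.Preconnected)
    (ha : G.neighborSet a ⊆ {b}) (hb : G.neighborSet b ⊆ {a}) (v : V) : v = a ∨ v = b := by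
  obtain ⟨p⟩ := hG a v
  suffices ∀ {u w : V}, G.Walk u w → u = a ∨ u = b → w = a ∨ w = b from this p (.inl rfl)
  intro u w p
  induction p with
  | nil => exact id
  | cons h _ ih =>
    rintro (rfl | rfl)
    · exact ih (.inr (ha h))
    · exact ih (.inl (hb h))

lemma eq_top_of_forall_eq_or_eq (hab : G.Adj a b) (hall : ∀ v, v = a ∨ v = b) : G = ⊤ := by
  ext u v
  rcases hall u with rfl | rfl <;> rcases hall v with rfl | rfl <;>
    simp [hab, hab.symm, hab.ne, hab.ne.symm]

lemma nonempty_iso_top_fin_two_iff :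
    Nonempty (G ≃g (⊤ : SimpleGraph (Fin 2))) ↔ ∃ a b, G.Adj a b ∧ ∀ v, v = a ∨ v = b := by
  constructor
  · rintro ⟨e⟩
    refine ⟨e.symm 0, e.symm 1, e.symm.map_adj_iff.2 (by simp), fun v => ?_⟩
    rw [← e.symm_apply_apply v]
    rcases Fin.exists_fin_two.1 ⟨e v, rfl⟩ with h | h <;> simp [h]
  · rintro ⟨a, b, hab, hall⟩
    have hbij : Function.Bijective ![a, b] := by
      refine ⟨fun i j hij => ?_, fun v => ?_⟩
      · fin_cases i <;> fin_cases j <;> simp_all [hab.ne, hab.ne.symm]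
      · rcases hall v with rfl | rfl
        exacts [⟨0, rfl⟩, ⟨1, rfl⟩]
    rw [eq_top_of_forall_eq_or_eq hab hall]
    exact ⟨Iso.completeGraph (Equiv.ofBijective _ hbij).symm⟩

lemma Preconnected.nonempty_iso_top_fin_two (hG : G.Preconnected) (ha : ∃ c, G.Adj a c)
    (hab : G.neighborSet a ⊆ {b}) (hba : G.neighborSet b ⊆ {a}) :
    Nonempty (G ≃g (⊤ : SimpleGraph (Fin 2))) := by
  obtain ⟨c, hac⟩ := ha
  obtain rfl : c = b := hab hac
  exact nonempty_iso_top_fin_two_iff.2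
    ⟨a, c, hac, hG.forall_eq_or_eq_of_neighborSet_subset hab hba⟩

lemma neighborSet_boxProd_eq (ha : G.neighborSet a = {b}) (hb : G.neighborSet b = {a})
    (hx : H.neighborSet x = {y}) (hy : H.neighborSet y = {x}) :
    (G □ H).neighborSet (a, x) = (G □ H).neighborSet (b, y) := by
  simp only [neighborSet_boxProd, ha, hb, hx, hy, Set.singleton_prod_singleton]
  exact Set.union_comm _ _

lemma neighborSet_fst_subset_of_neighborSet_boxProd_eq
    (hN : (G □ H).neighborSet (a, x) = (G □ H).neighborSet (b, y)) (hxy : x ≠ y) :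
    G.neighborSet a ⊆ {b} := by
  intro c hc
  have : (c, x) ∈ (G □ H).neighborSet (b, y) := hN ▸ boxProd_adj_left.2 hc
  rcases this with ⟨-, hyx⟩ | ⟨-, hbc⟩
  exacts [absurd hyx.symm hxy, hbc.symm]

lemma neighborSet_snd_subset_of_neighborSet_boxProd_eq
    (hN : (G □ H).neighborSet (a, x) = (G □ H).neighborSet (b, y)) (hab : a ≠ b) :
    H.neighborSet x ⊆ {y} := by
  intro z hz
  have : (a, z) ∈ (G □ H).neighborSet (b, y) := hN ▸ boxProd_adj_right.2 hz
  rcases this with ⟨-, hyz⟩ | ⟨-, hba⟩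
  exacts [hyz.symm, absurd hba.symm hab]

lemma neighborSet_subset_of_neighborSet_boxProd_eq (hG : ∀ v, ∃ u, G.Adj v u)
    (hH : ∀ w, ∃ z, H.Adj w z) (hne : (a, x) ≠ (b, y))
    (hN : (G □ H).neighborSet (a, x) = (G □ H).neighborSet (b, y)) :
    (G.neighborSet a ⊆ {b} ∧ G.neighborSet b ⊆ {a}) ∧
      (H.neighborSet x ⊆ {y} ∧ H.neighborSet y ⊆ {x}) := by
  have hxy : x ≠ y := by
    rintro rfl
    have hab : a ≠ b := fun h => hne (h ▸ rfl)
    obtain ⟨z, hz⟩ := hH x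
    exact hz.ne (neighborSet_snd_subset_of_neighborSet_boxProd_eq hN hab hz).symm
  have hab : a ≠ b := by
    rintro rfl
    obtain ⟨c, hc⟩ := hG a
    exact hc.ne (neighborSet_fst_subset_of_neighborSet_boxProd_eq hN hxy hc).symm
  exact ⟨⟨neighborSet_fst_subset_of_neighborSet_boxProd_eq hN hxy,
      neighborSet_fst_subset_of_neighborSet_boxProd_eq hN.symm hxy.symm⟩,
    ⟨neighborSet_snd_subset_of_neighborSet_boxProd_eq hN hab,
      neighborSet_snd_subset_of_neighborSet_boxProd_eq hN.symm hab.symm⟩⟩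

end SimpleGraph

open SimpleGraph

theorem stmt4_general {V W : Type*}
    (G : SimpleGraph V) (H : SimpleGraph W)
    (hGc : G.Connected) (hHc : H.Connected)
    (hG : ∀ v : V, ∃ u, G.Adj v u) (hH : ∀ x : W, ∃ y, H.Adj x y) :
    RThick (G □ H) ↔
      (Nonempty (G ≃g (⊤ : SimpleGraph (Fin 2))) ∧
        Nonempty (H ≃g (⊤ : SimpleGraph (Fin 2)))) := by
  constructor
  · rintro ⟨⟨a, x⟩, ⟨b, y⟩, hne, hN⟩
    obtain ⟨⟨hab, hba⟩, ⟨hxy, hyx⟩⟩ := neighborSet_subset_of_neighborSet_boxProd_eq hG hH hne hN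
    exact ⟨hGc.preconnected.nonempty_iso_top_fin_two (hG a) hab hba,
      hHc.preconnected.nonempty_iso_top_fin_two (hH x) hxy hyx⟩
  · rintro ⟨hGK, hHK⟩
    obtain ⟨a, b, hab, hGab⟩ := nonempty_iso_top_fin_two_iff.1 hGK
    obtain ⟨x, y, hxy, hHxy⟩ := nonempty_iso_top_fin_two_iff.1 hHK
    refine ⟨(a, x), (b, y), fun h => hab.ne (congrArg Prod.fst h), neighborSet_boxProd_eq
      (neighborSet_eq_singleton_of_forall_eq_or_eq hab hGab)
      (neighborSet_eq_singleton_of_forall_eq_or_eq hab.symm fun v => (hGab v).symm)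
      (neighborSet_eq_singleton_of_forall_eq_or_eq hxy hHxy)
      (neighborSet_eq_singleton_of_forall_eq_or_eq hxy.symm fun w => (hHxy w).symm)⟩

theorem stmt4 {V W : Type*} [Fintype V] [Fintype W]
    (G : SimpleGraph V) (H : SimpleGraph W)
    (hGc : G.Connected) (hHc : H.Connected)
    (hG : ∀ v : V, ∃ u, G.Adj v u) (hH : ∀ x : W, ∃ y, H.Adj x y) :
    RThick (G □ H) ↔
      (Nonempty (G ≃g (⊤ : SimpleGraph (Fin 2))) ∧
        Nonempty (H ≃g (⊤ : SimpleGraph (Fin 2)))) :=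
  stmt4_general G H hGc hHc hG hH
end

section
/- Let Γ and Σ be finite graphs without isolated vertices. Then the strong product Γ ⊠ Σ is R-thin, i.e., distinct vertices of Γ ⊠ Σ always have distinct open neighbourhoods. -/
def strongProd {V W : Type*} (G : SimpleGraph V) (H : SimpleGraph W) :
    SimpleGraph (V × W) where
  Adj p q := (p.1 = q.1 ∧ H.Adj p.2 q.2) ∨ (G.Adj p.1 q.1 ∧ H.Adj p.2 q.2) ∨
    (G.Adj p.1 q.1 ∧ p.2 = q.2)
  symm := by
    constructor
    rintro p q (⟨h1, h2⟩ | ⟨h1, h2⟩ | ⟨h1, h2⟩)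
    · exact Or.inl ⟨h1.symm, h2.symm⟩
    · exact Or.inr (Or.inl ⟨h1.symm, h2.symm⟩)
    · exact Or.inr (Or.inr ⟨h1.symm, h2.symm⟩)
  loopless := by
    constructor
    rintro p (⟨_, h2⟩ | ⟨h1, _⟩ | ⟨h1, _⟩)
    · exact H.ne_of_adj h2 rfl
    · exact G.ne_of_adj h1 rfl
    · exact G.ne_of_adj h1 rfl

def semiStrongProd {V W : Type*} (G : SimpleGraph V) (H : SimpleGraph W) :
    SimpleGraph (V × W) where
  Adj p q := (G.Adj p.1 q.1 ∨ p.1 = q.1) ∧ H.Adj p.2 q.2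
  symm := by
    constructor
    rintro p q ⟨h1 | h1, h2⟩
    · exact ⟨Or.inl h1.symm, h2.symm⟩
    · exact ⟨Or.inr h1.symm, h2.symm⟩
  loopless := by
    constructor
    rintro p ⟨_, h2⟩
    exact H.ne_of_adj h2 rfl

def lexProd {V W : Type*} (G : SimpleGraph V) (H : SimpleGraph W) :
    SimpleGraph (V × W) where
  Adj p q := G.Adj p.1 q.1 ∨ (p.1 = q.1 ∧ H.Adj p.2 q.2)
  symm := by
    constructor
    rintro p q (h | ⟨h1, h2⟩)
    · exact Or.inl h.symm
    · exact Or.inr ⟨h1.symm, h2.symm⟩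
  loopless := by
    constructor
    rintro p (h | ⟨_, h2⟩)
    · exact G.ne_of_adj h rfl
    · exact H.ne_of_adj h2 rfl

def directProd {V W : Type*} (G : SimpleGraph V) (H : SimpleGraph W) :
    SimpleGraph (V × W) where
  Adj p q := G.Adj p.1 q.1 ∧ H.Adj p.2 q.2
  symm := by
    constructor
    rintro p q ⟨h1, h2⟩
    exact ⟨h1.symm, h2.symm⟩
  loopless := by
    constructor
    rintro p ⟨h1, _⟩
    exact G.ne_of_adj h1 rfl

def RThin {V : Type*} (G : SimpleGraph V) : Prop :=
  ∀ u v : V, G.neighborSet u = G.neighborSet v → u = v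

/-!
Closed neighbourhoods multiply in the strong product: two vertices are adjacent iff they are
distinct and each coordinate is equal or adjacent. If `N(a, x) = N(b, y)`, then `(a, x)` and
`(b, y)` are not adjacent. A neighbour `z` of `x` gives `(a, z) ∈ N(a, x) = N(b, y)`, so `a` is
equal or adjacent to `b`; symmetrically `x` is equal or adjacent to `y`. Hence `(a, x) = (b, y)`.
-/

namespace SimpleGraph

theorem not_adj_of_neighborSet_eq {V : Type*} {G : SimpleGraph V} {u v : V}
    (h : G.neighborSet u = G.neighborSet v) : ¬ G.Adj u v := fun huv =>
  G.loopless.irrefl v (by simpa only [← mem_neighborSet, h] using huv)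

variable {V W : Type*} {G : SimpleGraph V} {H : SimpleGraph W}

theorem strongProd_adj_iff {p q : V × W} :
    (strongProd G H).Adj p q ↔
      p ≠ q ∧ (p.1 = q.1 ∨ G.Adj p.1 q.1) ∧ (p.2 = q.2 ∨ H.Adj p.2 q.2) := by
  obtain ⟨a, x⟩ := p
  obtain ⟨b, y⟩ := q
  change (_ ∨ _ ∨ _) ↔ _
  constructor
  · rintro (⟨rfl, hxy⟩ | ⟨hab, hxy⟩ | ⟨hab, rfl⟩)
    · exact ⟨fun h => H.ne_of_adj hxy (Prod.ext_iff.mp h).2, .inl rfl, .inr hxy⟩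
    · exact ⟨fun h => G.ne_of_adj hab (Prod.ext_iff.mp h).1, .inr hab, .inr hxy⟩
    · exact ⟨fun h => G.ne_of_adj hab (Prod.ext_iff.mp h).1, .inr hab, .inl rfl⟩
  · rintro ⟨hne, rfl | hab, rfl | hxy⟩
    · exact absurd rfl hne
    · exact .inl ⟨rfl, hxy⟩
    · exact .inr (.inr ⟨hab, rfl⟩)
    · exact .inr (.inl ⟨hab, hxy⟩)

theorem fst_eq_or_adj_of_neighborSet_strongProd_eq (hH : ∀ x : W, ∃ y, H.Adj x y)
    {p q : V × W} (h : (strongProd G H).neighborSet p = (strongProd G H).neighborSet q) :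
    p.1 = q.1 ∨ G.Adj p.1 q.1 := by
  obtain ⟨z, hz⟩ := hH p.2
  have hp : (strongProd G H).Adj p (p.1, z) :=
    strongProd_adj_iff.mpr ⟨fun he => H.ne_of_adj hz (congrArg Prod.snd he), .inl rfl, .inr hz⟩
  have hq : (strongProd G H).Adj (p.1, z) q := by
    rw [← mem_neighborSet, h] at hp
    exact hp.symm
  exact (strongProd_adj_iff.mp hq).2.1

theorem snd_eq_or_adj_of_neighborSet_strongProd_eq (hG : ∀ v : V, ∃ u, G.Adj v u)
    {p q : V × W} (h : (strongProd G H).neighborSet p = (strongProd G H).neighborSet q) :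
    p.2 = q.2 ∨ H.Adj p.2 q.2 := by
  obtain ⟨u, hu⟩ := hG p.1
  have hp : (strongProd G H).Adj p (u, p.2) :=
    strongProd_adj_iff.mpr ⟨fun he => G.ne_of_adj hu (congrArg Prod.fst he), .inr hu, .inl rfl⟩
  have hq : (strongProd G H).Adj (u, p.2) q := by
    rw [← mem_neighborSet, h] at hp
    exact hp.symm
  exact (strongProd_adj_iff.mp hq).2.2

end SimpleGraph

open SimpleGraph in
theorem stmt5_general {V W : Type*}
    (G : SimpleGraph V) (H : SimpleGraph W)
    (hG : ∀ v : V, ∃ u, G.Adj v u) (hH : ∀ x : W, ∃ y, H.Adj x y) :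
    RThin (strongProd G H) := by
  intro p q h
  by_contra hne
  exact not_adj_of_neighborSet_eq h <| strongProd_adj_iff.mpr
    ⟨hne, fst_eq_or_adj_of_neighborSet_strongProd_eq hH h,
      snd_eq_or_adj_of_neighborSet_strongProd_eq hG h⟩

theorem stmt5 {V W : Type*} [Fintype V] [Fintype W]
    (G : SimpleGraph V) (H : SimpleGraph W)
    (hG : ∀ v : V, ∃ u, G.Adj v u) (hH : ∀ x : W, ∃ y, H.Adj x y) :
    RThin (strongProd G H) :=
  stmt5_general G H hG hH
end

section
/- Let Γ be a finite bipartite graph with bipartition {U, W}, and let Σ be a finite graph admitting a nontrivial TF-morphism (α, β). Define permutations κ and τ on V(Γ) × V(Σ) by (a,x)^κ = (a, x^α) if a ∈ U and (a, x^β) if a ∈ W, and (a,x)^τ = (a, x^β) if a ∈ U and (a, x^α) if a ∈ W. Then (κ, τ) is a nontrivial TF-morphism of the Cartesian product Γ □ Σ. -/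
/-!
Both permutations map each fibre `{a} × W` to itself, acting there by `(α, β)` over `U` and by
`(β, α)` over `X`; both pairs are TF-morphisms of `H`, which handles the `H`-edges. A `G`-edge
joins a vertex of `U` to one of `X`, and the permutation applied at both of its ends is `α`, so it
is carried to a `G`-edge. Nontriviality is inherited from `α ≠ β` on any single fibre.
-/

open SimpleGraph

theorem IsTF.symm {W : Type*} {H : SimpleGraph W} {α β : Equiv.Perm W} (h : IsTF H α β) :
    IsTF H β α :=
  fun _ _ hxy => (h _ _ hxy.symm).symm

section Fibrewise

variable {V W : Type*} {G : SimpleGraph V} {H : SimpleGraph W} {σ ρ : V → Equiv.Perm W}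
  {κ τ : Equiv.Perm (V × W)}

theorem IsTF.boxProd_of_fibrewise (hfib : ∀ a, IsTF H (σ a) (ρ a))
    (hcompat : ∀ a b, G.Adj a b → σ a = ρ b)
    (hκ : ∀ a x, κ (a, x) = (a, σ a x)) (hτ : ∀ a x, τ (a, x) = (a, ρ a x)) :
    IsTF (G □ H) κ τ := by
  rintro ⟨a, x⟩ ⟨b, y⟩ hadj
  rw [hκ, hτ, boxProd_adj]
  rcases boxProd_adj.mp hadj with ⟨hab, hxy⟩ | ⟨hxy, hab⟩
  · dsimp only at hab hxy
    subst hxy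
    exact Or.inl ⟨hab, by rw [hcompat a b hab]⟩
  · dsimp only at hab hxy
    subst hab
    exact Or.inr ⟨hfib a x y hxy, rfl⟩

theorem ne_of_fibrewise_ne (hκ : ∀ a x, κ (a, x) = (a, σ a x))
    (hτ : ∀ a x, τ (a, x) = (a, ρ a x)) {a : V} (ha : σ a ≠ ρ a) : κ ≠ τ := by
  intro h
  refine ha (Equiv.ext fun x => ?_)
  simpa [hκ, hτ] using congrArg (fun f : Equiv.Perm (V × W) => (f (a, x)).2) h

end Fibrewise

theorem stmt10_general {V W : Type*} [Nonempty V]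
    (G : SimpleGraph V) (H : SimpleGraph W)
    (U X : Set V)
    (hpart : ∀ v : V, (v ∈ U ∧ v ∉ X) ∨ (v ∈ X ∧ v ∉ U))
    (hedge : ∀ u v : V, G.Adj u v → (u ∈ U ∧ v ∈ X) ∨ (u ∈ X ∧ v ∈ U))
    (α β : Equiv.Perm W) (hTF : IsTF H α β) (hne : α ≠ β)
    (κ τ : Equiv.Perm (V × W))
    (hκU : ∀ a ∈ U, ∀ x : W, κ (a, x) = (a, α x))
    (hκX : ∀ a ∈ X, ∀ x : W, κ (a, x) = (a, β x))
    (hτU : ∀ a ∈ U, ∀ x : W, τ (a, x) = (a, β x))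
    (hτX : ∀ a ∈ X, ∀ x : W, τ (a, x) = (a, α x)) :
    IsTF (G □ H) κ τ ∧ κ ≠ τ := by
  classical
  let σ : V → Equiv.Perm W := fun a => if a ∈ U then α else β
  let ρ : V → Equiv.Perm W := fun a => if a ∈ U then β else α
  have hκ : ∀ a x, κ (a, x) = (a, σ a x) := fun a x => by
    rcases hpart a with ⟨hU, -⟩ | ⟨hX, hU⟩ <;> simp [σ, *]
  have hτ : ∀ a x, τ (a, x) = (a, ρ a x) := fun a x => by
    rcases hpart a with ⟨hU, -⟩ | ⟨hX, hU⟩ <;> simp [ρ, *]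
  have hfib : ∀ a, IsTF H (σ a) (ρ a) := fun a => by
    by_cases hU : a ∈ U <;> simp [σ, ρ, hU, hTF, hTF.symm]
  have hX_not_U : ∀ v ∈ X, v ∉ U := fun v hX => by
    rcases hpart v with ⟨-, hX'⟩ | ⟨-, hU⟩
    exacts [absurd hX hX', hU]
  have hcompat : ∀ a b, G.Adj a b → σ a = ρ b := fun a b hab => by
    rcases hedge a b hab with ⟨haU, hbX⟩ | ⟨haX, hbU⟩
    · simp [σ, ρ, haU, hX_not_U b hbX]
    · simp [σ, ρ, hbU, hX_not_U a haX]
  obtain ⟨a⟩ := ‹Nonempty V›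
  have hσρ : σ a ≠ ρ a := by by_cases hU : a ∈ U <;> simp [σ, ρ, hU, hne, hne.symm]
  exact ⟨IsTF.boxProd_of_fibrewise hfib hcompat hκ hτ, ne_of_fibrewise_ne hκ hτ hσρ⟩

theorem stmt10 {V W : Type*} [Fintype V] [Fintype W] [Nonempty V]
    (G : SimpleGraph V) (H : SimpleGraph W)
    (U X : Set V)
    (hpart : ∀ v : V, (v ∈ U ∧ v ∉ X) ∨ (v ∈ X ∧ v ∉ U))
    (hedge : ∀ u v : V, G.Adj u v → (u ∈ U ∧ v ∈ X) ∨ (u ∈ X ∧ v ∈ U))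
    (α β : Equiv.Perm W) (hTF : IsTF H α β) (hne : α ≠ β)
    (κ τ : Equiv.Perm (V × W))
    (hκU : ∀ a ∈ U, ∀ x : W, κ (a, x) = (a, α x))
    (hκX : ∀ a ∈ X, ∀ x : W, κ (a, x) = (a, β x))
    (hτU : ∀ a ∈ U, ∀ x : W, τ (a, x) = (a, β x))
    (hτX : ∀ a ∈ X, ∀ x : W, τ (a, x) = (a, α x)) :
    IsTF (G □ H) κ τ ∧ κ ≠ τ :=
  stmt10_general G H U X hpart hedge α β hTF hne κ τ hκU hκX hτU hτX
end

section
/- Let n ≥ 2 and let Γ be the graph obtained from the complete graph K_{2n} on vertices {u₁,…,u_n, v₁,…,v_n} by removing the perfect matching {u_i v_i : 1 ≤ i ≤ n} (i.e., the cocktail party graph). Then the pair of permutations α = (u₁ u₂ … u_n) and β = (v₁ v₂ … v_n) is a TFS-morphism of Γ. -/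
/-- The cocktail party graph: `K_{2n}` minus a perfect matching.  Vertices are
pairs `(s, i)` with `s : Bool` (`false` for the `uᵢ`'s, `true` for the `vᵢ`'s),
and `(s, i) ~ (t, j)` iff `i ≠ j`. -/
def cocktail (n : ℕ) : SimpleGraph (Bool × ZMod n) where
  Adj p q := p.2 ≠ q.2
  symm := by
    constructor
    rintro p q h
    exact h.symm
  loopless := by
    constructor
    rintro p h
    exact h rfl

/-! Both permutations keep each side of the graph and rotate the indices on it, by `a s` and
`b s` respectively. Within one side any two distinct vertices are adjacent, so the second TFS
condition only needs care across sides, where `α (s, i)` and `β (!s, j)` are forced to be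
adjacent for `i ≠ j` exactly when the two shifts agree. -/

theorem isTFS_cocktail_of_shifts {n : ℕ} (α β : Equiv.Perm (Bool × ZMod n))
    (a b : Bool → ZMod n)
    (hα : ∀ s i, α (s, i) = (s, i + a s)) (hβ : ∀ s i, β (s, i) = (s, i + b s))
    (hdiag : ∀ s, a s ≠ b s) (hcross : ∀ s, a s = b (!s)) :
    IsTFS (cocktail n) α β := by
  constructor
  · rintro ⟨s, i⟩
    rw [hα, hβ]
    exact fun h => hdiag s (add_left_cancel h)
  · rintro ⟨s, i⟩ ⟨t, j⟩ (hij : i ≠ j)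
    rw [hα, hβ]
    by_cases hst : (s, i + a s) = (t, j + b t)
    · exact Or.inr hst
    left
    obtain rfl | rfl : t = s ∨ t = !s := by cases s <;> cases t <;> simp
    · exact fun h => hst (Prod.ext rfl h)
    · rw [← hcross]
      exact fun h => hij (add_right_cancel h)

theorem stmt14 (n : ℕ) (hn : 2 ≤ n)
    (α β : Equiv.Perm (Bool × ZMod n))
    (hαu : ∀ i : ZMod n, α (false, i) = (false, i + 1))
    (hαv : ∀ i : ZMod n, α (true, i) = (true, i))
    (hβu : ∀ i : ZMod n, β (false, i) = (false, i))
    (hβv : ∀ i : ZMod n, β (true, i) = (true, i + 1)) :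
    IsTFS (cocktail n) α β := by
  have : Fact (1 < n) := ⟨hn⟩
  refine isTFS_cocktail_of_shifts α β (fun s => cond s 0 1) (fun s => cond s 1 0)
    ?_ ?_ ?_ (fun s => by cases s <;> rfl)
  · rintro (_ | _) i <;> simp [hαu, hαv]
  · rintro (_ | _) i <;> simp [hβu, hβv]
  · rintro (_ | _) <;> simp
end

section
/- Let Γ = Cay(Z_{2m}, S) be a circulant graph (S ⊆ Z_{2m} \ {0}, S = −S). If the Cayley graph Cay(Z_{2m}, (S \ {m}) + m) has an automorphism σ fixing 0 but moving m, then Γ admits a nontrivial TF-morphism, where the TF-morphism is given by x^α = x^σ + m and x^β = (x + m)^σ. -/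
open SimpleGraph

/-!
Write `T = (S \ {m}) + m`. Since `m` has order at most two and `0 ∉ S`, `u` and `w` are adjacent
in `Cay(G, T)` exactly when `u ≠ w` and `u` is adjacent to `w + m` in `Cay(G, S)`. Hence for an edge
`u ~ v` of `Cay(G, S)` with `v ≠ u + m`, the pair `u, v + m` is an edge of `Cay(G, T)`, which `σ`
preserves, and reading this back in `Cay(G, S)` gives `σ u + m ~ σ (v + m)`. For the remaining
edges `u ~ u + m` one has `α u = σ u + m` and `β (u + m) = σ u`, again an edge. Finally
`α 0 = m ≠ σ m = β 0`.
-/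

section ShiftedCirculant

variable {G : Type*} [AddCommGroup G] {S : Set G} {m : G}

theorem add_add_eq_self_of_add_self_eq_zero (hm : m + m = 0) (x : G) : x + m + m = x := by
  rw [add_assoc, hm, add_zero]

theorem mem_image_add_diff_singleton_iff (hm : m + m = 0) {x : G} :
    x ∈ (· + m) '' (S \ {m}) ↔ x + m ∈ S ∧ x ≠ 0 := by
  constructor
  · rintro ⟨s, ⟨hs, hsm⟩, rfl⟩
    refine ⟨by rwa [add_add_eq_self_of_add_self_eq_zero hm], fun hs0 => hsm ?_⟩
    exact (eq_neg_of_add_eq_zero_left hs0).trans (neg_eq_of_add_eq_zero_left hm)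
  · rintro ⟨hx, hx0⟩
    refine ⟨x + m, ⟨hx, fun h => hx0 (add_eq_right.mp h)⟩, ?_⟩
    exact add_add_eq_self_of_add_self_eq_zero hm x

theorem circulantGraph_image_add_diff_singleton_adj (hm : m + m = 0) (h0 : (0 : G) ∉ S)
    {u w : G} :
    (circulantGraph ((· + m) '' (S \ {m}))).Adj u w ↔ u ≠ w ∧ (circulantGraph S).Adj u (w + m) := by
  have hneg : -m = m := neg_eq_of_add_eq_zero_left hm
  have hsub₁ : u - (w + m) = u - w + m := by rw [← sub_sub, sub_eq_add_neg (u - w), hneg]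
  have hsub₂ : w + m - u = w - u + m := by abel
  have hne₁ : u - w + m ∈ S → u ≠ w + m := by
    rintro hS rfl
    exact h0 (by rwa [add_sub_cancel_left, hm] at hS)
  have hne₂ : w - u + m ∈ S → u ≠ w + m := by
    rintro hS rfl
    exact h0 (by rwa [sub_add_cancel_left, neg_add_cancel] at hS)
  simp only [circulantGraph_adj, mem_image_add_diff_singleton_iff hm, hsub₁, hsub₂, sub_ne_zero,
    ne_comm (a := w)]
  tauto

theorem circulantGraph_add_adj_iff (hm : m + m = 0) {x y : G} :
    (circulantGraph S).Adj (x + m) y ↔ (circulantGraph S).Adj x (y + m) := by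
  rw [← circulantGraph_adj_translate (d := m), add_add_eq_self_of_add_self_eq_zero hm]

theorem isTF_circulantGraph_of_image_add_diff_singleton (hm : m + m = 0) (h0 : (0 : G) ∉ S)
    {σ α β : Equiv.Perm G}
    (hσ : ∀ x y, (circulantGraph ((· + m) '' (S \ {m}))).Adj x y ↔
      (circulantGraph ((· + m) '' (S \ {m}))).Adj (σ x) (σ y))
    (hα : ∀ x, α x = σ x + m) (hβ : ∀ x, β x = σ (x + m)) :
    IsTF (circulantGraph S) α β := by
  intro u v huv
  rw [hα, hβ, circulantGraph_add_adj_iff hm]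
  by_cases hv : v = u + m
  · subst hv
    rw [add_add_eq_self_of_add_self_eq_zero hm]
    simpa [circulantGraph_adj] using huv
  · have hT : (circulantGraph ((· + m) '' (S \ {m}))).Adj u (v + m) := by
      refine (circulantGraph_image_add_diff_singleton_adj hm h0).2 ⟨fun h => hv ?_, ?_⟩
      · rw [h, add_add_eq_self_of_add_self_eq_zero hm]
      · rwa [add_add_eq_self_of_add_self_eq_zero hm]
    exact ((circulantGraph_image_add_diff_singleton_adj hm h0).1 ((hσ _ _).1 hT)).2

end ShiftedCirculant

theorem stmt15_general (m : ℕ) (S : Set (ZMod (2 * m)))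
    (h0 : (0 : ZMod (2 * m)) ∉ S)
    (σ : Equiv.Perm (ZMod (2 * m)))
    (hσadj : ∀ x y : ZMod (2 * m),
      (circulantGraph ((· + (m : ZMod (2 * m))) '' (S \ {(m : ZMod (2 * m))}))).Adj x y ↔
      (circulantGraph ((· + (m : ZMod (2 * m))) '' (S \ {(m : ZMod (2 * m))}))).Adj (σ x) (σ y))
    (hσ0 : σ 0 = 0) (hσm : σ (m : ZMod (2 * m)) ≠ (m : ZMod (2 * m)))
    (α β : Equiv.Perm (ZMod (2 * m)))
    (hα : ∀ x, α x = σ x + (m : ZMod (2 * m)))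
    (hβ : ∀ x, β x = σ (x + (m : ZMod (2 * m)))) :
    IsTF (circulantGraph S) α β ∧ α ≠ β := by
  have hm : (m : ZMod (2 * m)) + m = 0 := by
    rw [← Nat.cast_add, ← two_mul, ZMod.natCast_self]
  refine ⟨isTF_circulantGraph_of_image_add_diff_singleton hm h0 hσadj hα hβ, fun hαβ => hσm ?_⟩
  simpa [hα, hβ, hσ0] using (DFunLike.congr_fun hαβ 0).symm

theorem stmt15 (m : ℕ) (hm : 0 < m) (S : Set (ZMod (2 * m)))
    (hS : ∀ s ∈ S, -s ∈ S) (h0 : (0 : ZMod (2 * m)) ∉ S)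
    (σ : Equiv.Perm (ZMod (2 * m)))
    (hσadj : ∀ x y : ZMod (2 * m),
      (circulantGraph ((· + (m : ZMod (2 * m))) '' (S \ {(m : ZMod (2 * m))}))).Adj x y ↔
      (circulantGraph ((· + (m : ZMod (2 * m))) '' (S \ {(m : ZMod (2 * m))}))).Adj (σ x) (σ y))
    (hσ0 : σ 0 = 0) (hσm : σ (m : ZMod (2 * m)) ≠ (m : ZMod (2 * m)))
    (α β : Equiv.Perm (ZMod (2 * m)))
    (hα : ∀ x, α x = σ x + (m : ZMod (2 * m)))
    (hβ : ∀ x, β x = σ (x + (m : ZMod (2 * m)))) :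
    IsTF (circulantGraph S) α β ∧ α ≠ β :=
  stmt15_general m S h0 σ hσadj hσ0 hσm α β hα hβ
end

section
/- Let Γ = Cay(Z_{2m}, S) be a circulant graph satisfying: there exist nontrivial subgroups H, K of Z_{2m} with |K| even, K_o = K \ 2K, m ∈ H \ K_o, and either (1) S + H ⊆ S ∪ (K_o + H) with H ∩ K_o = ∅, or (2) (S \ K_o) + H ⊆ S ∪ K_o with |H| ≠ 2 or 4 | |K|. Then Γ is isomorphic to Cay(Z_{2m}, S + m). -/
/-!
Let `γ` generate `K`. Since `|K|` is even, `γ ∉ 2K`, every element of `K_o` lies in `γ + 2K`, and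
`K` contains the unique involution `m` of `ℤ_{2m}`. Put `L = 2K + H` in case (1) and `L = 2K` in
case (2) (then `m ∈ 2K` because `m ∉ K_o`). In both cases `m ∈ L`, `γ ∉ L`, `2γ ∈ L`, and `S` is
invariant under adding `m` away from the coset `γ + L`. Pick a union `T` of cosets of `L` with
`T + γ` equal to the complement of `T`, and add `m` exactly on `T`. A pair of vertices on the same
side of `T` keeps its difference, which is not in `γ + L`; a pair on opposite sides has its
difference shifted by `m`. So this involution maps `Cay(S)` onto `Cay(S + m)`.
-/

open SimpleGraph Pointwise

/-- `2K = {2k : k ∈ K}` for a subgroup `K`. -/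
def twoMul {n : ℕ} (K : AddSubgroup (ZMod n)) : Set (ZMod n) :=
  (fun k => 2 * k) '' (K : Set (ZMod n))

/-- `K_o = K \ 2K`. -/
def oddPart {n : ℕ} (K : AddSubgroup (ZMod n)) : Set (ZMod n) :=
  (K : Set (ZMod n)) \ twoMul K

section Switching

variable {G : Type*} [AddCommGroup G] {L : AddSubgroup G} {γ : G}

lemma AddSubgroup.mem_or_sub_mem_of_mem_sup_zmultiples (h2γ : γ + γ ∈ L) {x : G}
    (hx : x ∈ L ⊔ AddSubgroup.zmultiples γ) : x ∈ L ∨ x - γ ∈ L := by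
  obtain ⟨l, hl, _, ⟨k, rfl⟩, rfl⟩ := AddSubgroup.mem_sup.mp hx
  obtain ⟨e, rfl | rfl⟩ := Int.even_or_odd' k
  · left
    simpa [mul_comm, mul_zsmul, two_zsmul] using L.add_mem hl (L.zsmul_mem h2γ e)
  · right
    have : l + (2 * e + 1) • γ - γ = l + e • (γ + γ) := by
      rw [add_zsmul, one_zsmul, mul_comm, mul_zsmul, two_zsmul]; abel
    simpa [this] using L.add_mem hl (L.zsmul_mem h2γ e)

lemma exists_set_add_mem_iff_notMem (hγ : γ ∉ L) (h2γ : γ + γ ∈ L) :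
    ∃ T : Set G, (∀ x, ∀ l ∈ L, x + l ∈ T ↔ x ∈ T) ∧ ∀ x, x + γ ∈ T ↔ x ∉ T := by
  -- Each coset of `M` is the union of two cosets of `L`; `T` takes the one containing the
  -- chosen representative of the `M`-coset.
  set M := L ⊔ AddSubgroup.zmultiples γ
  let rep : G → G := fun x => (x : G ⧸ M).out
  have rep_add : ∀ x, ∀ u ∈ M, rep (x + u) = rep x := fun x u hu =>
    congrArg Quotient.out (QuotientAddGroup.mk_add_of_mem x hu)
  have sub_rep_mem : ∀ x, x - rep x ∈ M := fun x => by
    obtain ⟨u, hu⟩ := QuotientAddGroup.mk_out_eq_add M x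
    simp [rep, hu]
  refine ⟨{x | x - rep x ∈ L}, fun x l hl => ?_, fun x => ?_⟩
  · simp only [Set.mem_ofPred_eq, rep_add x l (le_sup_left (a := L) hl),
      show x + l - rep x = x - rep x + l by abel, L.add_mem_cancel_right hl]
  · simp only [Set.mem_ofPred_eq,
      rep_add x γ (le_sup_right (a := L) (AddSubgroup.mem_zmultiples γ)),
      show x + γ - rep x = x - rep x + γ by abel]
    refine ⟨fun h hx => hγ (by simpa using L.sub_mem h hx), fun h => ?_⟩
    have := (AddSubgroup.mem_or_sub_mem_of_mem_sup_zmultiples h2γ (sub_rep_mem x)).resolve_left h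
    simpa [add_assoc] using L.add_mem this h2γ

theorem circulantGraph_nonempty_iso_image_add {S : Set G} {c : G} (hc : c + c = 0)
    (hcL : c ∈ L) (hγ : γ ∉ L) (h2γ : γ + γ ∈ L) (hS : ∀ d ∈ S, d + c ∉ S → d - γ ∈ L) :
    Nonempty (circulantGraph S ≃g circulantGraph ((· + c) '' S)) := by
  classical
  obtain ⟨T, hTL, hTγ⟩ := exists_set_add_mem_iff_notMem hγ h2γ
  have hcc : ∀ x, x + c + c = x := fun x => by rw [add_assoc, hc, add_zero]
  have hperiodic : ∀ d, d - γ ∉ L → (d + c ∈ S ↔ d ∈ S) := fun d hd => by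
    refine ⟨fun h => by_contra fun h' => hd ?_, fun h => by_contra fun h' => hd (hS d h h')⟩
    simpa [sub_right_comm _ γ c] using L.sub_mem (hS (d + c) h (by rwa [hcc])) hcL
  have hswitch : ∀ x y, x - y - γ ∈ L → (x ∈ T ↔ y ∉ T) := fun x y h => by
    rw [← hTγ, ← hTL (y + γ) _ h, show y + γ + (x - y - γ) = x by abel]
  have hinv : Function.Involutive (T.piecewise (· + c) id) := fun x => by
    by_cases hx : x ∈ T <;> simp [Set.piecewise, hx, hTL x c hcL, hcc]
  let φ : Equiv.Perm G := hinv.toPerm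
  have hsub : ∀ x y, φ x - φ y + c ∈ S ↔ x - y ∈ S := fun x y => by
    by_cases hx : x ∈ T <;> by_cases hy : y ∈ T <;>
      simp only [φ, Function.Involutive.coe_toPerm, Set.piecewise, hx, hy, if_true, if_false, id]
    · rw [show x + c - (y + c) = x - y by abel]
      exact hperiodic _ fun h => (hswitch x y h).mp hx hy
    · rw [show x + c - y + c = x - y + c + c by abel, hcc]
    · rw [show x - (y + c) + c = x - y by abel]
    · exact hperiodic _ fun h => hx ((hswitch x y h).mpr hy)
  refine ⟨⟨φ, fun {a b} => ?_⟩⟩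
  simp only [circulantGraph_adj, Set.image_add_right, Set.mem_preimage,
    neg_eq_of_add_eq_zero_left hc, hsub, φ.injective.ne_iff]

end Switching

lemma ZMod.eq_natCast_of_addOrderOf_eq_two {m : ℕ} [NeZero m] {y : ZMod (2 * m)}
    (hy : addOrderOf y = 2) : y = m := by
  have hy0 : y.val ≠ 0 := by
    rw [ZMod.val_ne_zero]; rintro rfl; simp at hy
  have hdvd : 2 * m ∣ y.val + y.val := by
    rw [← ZMod.natCast_eq_zero_iff, Nat.cast_add, ZMod.natCast_zmod_val, ← two_nsmul]
    exact addOrderOf_dvd_iff_nsmul_eq_zero.mp hy.dvd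
  have : y.val + y.val = 2 * m :=
    Nat.eq_of_dvd_of_lt_two_mul (by omega) hdvd (by have := ZMod.val_lt y; omega)
  rw [← ZMod.natCast_zmod_val y, show y.val = m by omega]

lemma ZMod.natCast_mem_of_even_card {m : ℕ} [NeZero m] (K : AddSubgroup (ZMod (2 * m)))
    (hK : Even (Nat.card K)) : (m : ZMod (2 * m)) ∈ K := by
  obtain ⟨y, hy⟩ := exists_prime_addOrderOf_dvd_card' (G := K) 2 (even_iff_two_dvd.mp hK)
  rw [← ZMod.eq_natCast_of_addOrderOf_eq_two ((AddSubgroup.addOrderOf_coe y).trans hy)]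
  exact y.2

section TwoMul

variable {n : ℕ}

/-- `2K` as a subgroup: its carrier is `twoMul K` by definition. -/
def twoMulSubgroup (K : AddSubgroup (ZMod n)) : AddSubgroup (ZMod n) :=
  K.map (AddMonoidHom.mulLeft 2)

lemma add_self_mem_twoMulSubgroup {K : AddSubgroup (ZMod n)} {x : ZMod n} (hx : x ∈ K) :
    x + x ∈ twoMulSubgroup K :=
  ⟨x, hx, two_mul x⟩

lemma twoMulSubgroup_le (K : AddSubgroup (ZMod n)) : twoMulSubgroup K ≤ K := by
  rintro _ ⟨x, hx, rfl⟩
  change 2 * x ∈ K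
  rw [two_mul]
  exact K.add_mem hx hx

lemma zsmul_mem_twoMulSubgroup_zmultiples (γ : ZMod n) {a : ℤ} (ha : Even a) :
    a • γ ∈ twoMulSubgroup (AddSubgroup.zmultiples γ) := by
  obtain ⟨b, rfl⟩ := ha
  rw [add_zsmul]
  exact add_self_mem_twoMulSubgroup (AddSubgroup.zsmul_mem_zmultiples γ b)

lemma notMem_twoMulSubgroup_zmultiples {γ : ZMod n} (hγ : Even (addOrderOf γ)) :
    γ ∉ twoMulSubgroup (AddSubgroup.zmultiples γ) := by
  rintro ⟨_, ⟨b, rfl⟩, hb⟩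
  change 2 * (b • γ) = γ at hb
  have hdvd : (addOrderOf γ : ℤ) ∣ 2 * b - 1 := by
    rw [addOrderOf_dvd_iff_zsmul_eq_zero, zsmul_eq_mul]
    rw [zsmul_eq_mul] at hb
    push_cast
    linear_combination hb
  have := (even_iff_two_dvd.mp (Int.even_coe_nat _ |>.mpr hγ)).trans hdvd
  omega

lemma sub_mem_twoMulSubgroup_of_mem_oddPart {γ x : ZMod n}
    (hx : x ∈ oddPart (AddSubgroup.zmultiples γ)) :
    x - γ ∈ twoMulSubgroup (AddSubgroup.zmultiples γ) := by
  obtain ⟨⟨a, rfl⟩, hx2⟩ := hx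
  dsimp only at hx2 ⊢
  have ha : Odd a := Int.not_even_iff_odd.mp fun ha =>
    hx2 (zsmul_mem_twoMulSubgroup_zmultiples γ ha)
  convert zsmul_mem_twoMulSubgroup_zmultiples γ (ha.sub_odd odd_one) using 1
  rw [sub_zsmul, one_zsmul, sub_eq_add_neg]

lemma notMem_twoMulSubgroup_sup {K H : AddSubgroup (ZMod n)}
    (hHK : (H : Set (ZMod n)) ∩ oddPart K = ∅) {x : ZMod n} (hx : x ∈ oddPart K) :
    x ∉ twoMulSubgroup K ⊔ H := by
  intro h
  obtain ⟨a, ha, b, hb, rfl⟩ := AddSubgroup.mem_sup.mp h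
  refine hHK.subset ⟨hb, ?_, fun hb2 => hx.2 ?_⟩
  · simpa using K.sub_mem hx.1 (twoMulSubgroup_le K ha)
  · exact (twoMulSubgroup K).add_mem ha hb2

end TwoMul

section Conditions

variable {n : ℕ} {S : Set (ZMod n)} {H : AddSubgroup (ZMod n)} {γ c : ZMod n}

open AddSubgroup

lemma sub_mem_twoMulSubgroup_sup_of_add_subset (hcH : c ∈ H)
    (hSH : S + (H : Set (ZMod n)) ⊆ S ∪ (oddPart (zmultiples γ) + (H : Set (ZMod n)))) :
    ∀ d ∈ S, d + c ∉ S → d - γ ∈ twoMulSubgroup (zmultiples γ) ⊔ H := by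
  intro d hd hdc
  obtain ⟨u, hu, v, hv, huv⟩ := (hSH (Set.add_mem_add hd hcH)).resolve_left hdc
  rw [show d - γ = (u - γ) + (v - c) by linear_combination -huv]
  exact add_mem (mem_sup_left (sub_mem_twoMulSubgroup_of_mem_oddPart hu))
    (mem_sup_right (H.sub_mem hv hcH))

lemma sub_mem_twoMulSubgroup_of_diff_add_subset (hcH : c ∈ H)
    (hc : c ∈ twoMulSubgroup (zmultiples γ))
    (hSH : (S \ oddPart (zmultiples γ)) + (H : Set (ZMod n)) ⊆ S ∪ oddPart (zmultiples γ)) :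
    ∀ d ∈ S, d + c ∉ S → d - γ ∈ twoMulSubgroup (zmultiples γ) := by
  intro d hd hdc
  by_cases hdK : d ∈ oddPart (zmultiples γ)
  · exact sub_mem_twoMulSubgroup_of_mem_oddPart hdK
  · have hdcK := (hSH (Set.add_mem_add ⟨hd, hdK⟩ hcH)).resolve_left hdc
    rw [show d - γ = (d + c - γ) - c by ring]
    exact sub_mem (sub_mem_twoMulSubgroup_of_mem_oddPart hdcK) hc

end Conditions

theorem stmt16_general (m : ℕ) (hm : 0 < m) (S : Set (ZMod (2 * m)))
    (H K : AddSubgroup (ZMod (2 * m)))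
    (hKeven : Even (Nat.card K))
    (hmH : (m : ZMod (2 * m)) ∈ H)
    (hmKo : (m : ZMod (2 * m)) ∉ oddPart K)
    (hcond :
      (S + (H : Set (ZMod (2 * m))) ⊆ S ∪ (oddPart K + (H : Set (ZMod (2 * m)))) ∧
        (H : Set (ZMod (2 * m))) ∩ oddPart K = ∅) ∨
      ((S \ oddPart K) + (H : Set (ZMod (2 * m))) ⊆ S ∪ oddPart K ∧
        (Nat.card H ≠ 2 ∨ 4 ∣ Nat.card K))) :
    Nonempty
      ((circulantGraph S) ≃g
        (circulantGraph ((· + (m : ZMod (2 * m))) '' S))) := by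
  have : NeZero m := ⟨hm.ne'⟩
  have hm_add : (m : ZMod (2 * m)) + m = 0 := by
    rw [← Nat.cast_add, ← two_mul, ZMod.natCast_self]
  have hmK := ZMod.natCast_mem_of_even_card K hKeven
  obtain ⟨γ, rfl⟩ := (K.isAddCyclic_iff_exists_zmultiples_eq_top).mp inferInstance
  rw [Nat.card_zmultiples] at hKeven
  have hγ : γ ∈ oddPart (AddSubgroup.zmultiples γ) :=
    ⟨AddSubgroup.mem_zmultiples γ, notMem_twoMulSubgroup_zmultiples hKeven⟩
  have h2γ := add_self_mem_twoMulSubgroup (AddSubgroup.mem_zmultiples γ)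
  rcases hcond with ⟨hSH, hHK⟩ | ⟨hSH, -⟩
  · exact circulantGraph_nonempty_iso_image_add hm_add (AddSubgroup.mem_sup_right hmH)
      (notMem_twoMulSubgroup_sup hHK hγ) (AddSubgroup.mem_sup_left h2γ)
      (sub_mem_twoMulSubgroup_sup_of_add_subset hmH hSH)
  · have hm2K : (m : ZMod (2 * m)) ∈ twoMulSubgroup (AddSubgroup.zmultiples γ) :=
      not_not.mp fun h => hmKo ⟨hmK, h⟩
    exact circulantGraph_nonempty_iso_image_add hm_add hm2K hγ.2 h2γ
      (sub_mem_twoMulSubgroup_of_diff_add_subset hmH hm2K hSH)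

theorem stmt16 (m : ℕ) (hm : 0 < m) (S : Set (ZMod (2 * m)))
    (hS : ∀ s ∈ S, -s ∈ S) (h0 : (0 : ZMod (2 * m)) ∉ S)
    (H K : AddSubgroup (ZMod (2 * m))) (hHnt : H ≠ ⊥) (hKnt : K ≠ ⊥)
    (hKeven : Even (Nat.card K))
    (hmH : (m : ZMod (2 * m)) ∈ H)
    (hmKo : (m : ZMod (2 * m)) ∉ oddPart K)
    (hcond :
      (S + (H : Set (ZMod (2 * m))) ⊆ S ∪ (oddPart K + (H : Set (ZMod (2 * m)))) ∧
        (H : Set (ZMod (2 * m))) ∩ oddPart K = ∅) ∨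
      ((S \ oddPart K) + (H : Set (ZMod (2 * m))) ⊆ S ∪ oddPart K ∧
        (Nat.card H ≠ 2 ∨ 4 ∣ Nat.card K))) :
    Nonempty
      ((circulantGraph S) ≃g
        (circulantGraph ((· + (m : ZMod (2 * m))) '' S))) :=
  stmt16_general m hm S H K hKeven hmH hmKo hcond
end

section
/- Let Γ = Cay(Z_{2m}, S) satisfy the hypotheses of Lemma 'hmmtype1' with a subgroup H of odd order: i.e., there exist nontrivial subgroups H, K of Z_{2m}, |K| even, K_o = K \ 2K, |H| odd, and either S + H ⊆ S ∪ (K_o + H) with H ∩ K_o = ∅, or (S \ K_o) + H ⊆ S ∪ K_o. Then, setting L = K + H and L_o = L \ 2L, one has (S \ L_o) + H = S \ L_o. -/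
open SimpleGraph Pointwise

/-
Doubling is a bijection on a group of odd order, so every element of the odd subgroup H is a
double inside H ≤ L; so translating by H preserves L and 2L, hence also L_o = L \ 2L. Moreover
K_o ⊆ L_o: if k ∈ K is a double 2(a + b) with a ∈ K, b ∈ H, then k - 2a lies in the odd group
K ∩ H, so it is a double 2c there and k = 2(a + c) ∈ 2K. So K_o + H ⊆ L_o, and either hypothesis
says that translating an element of S \ L_o by H stays in S up to an error in L_o, which is
excluded because the complement of L_o is H-invariant.
-/

lemma exists_two_nsmul_eq_of_odd_card {G : Type*} [AddGroup G] (hG : Odd (Nat.card G)) (g : G) :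
    ∃ c, 2 • c = g :=
  (Nat.Coprime.nsmul_right_bijective hG.coprime_two_right).surjective g

lemma Set.sdiff_add_subset_sdiff {α : Type*} [Add α] {S A O H : Set α} (hAO : A ⊆ O)
    (hO : ∀ x ∉ O, ∀ h ∈ H, x + h ∉ O) (hS : (S \ O) + H ⊆ S ∪ A) :
    (S \ O) + H ⊆ S \ O := by
  rintro _ ⟨s, hs, h, hh, rfl⟩
  have hsh : s + h ∉ O := hO s hs.2 h hh
  exact ⟨(hS ⟨s, hs, h, hh, rfl⟩).resolve_right (fun hA => hsh (hAO hA)), hsh⟩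

variable {n : ℕ} {H K L : AddSubgroup (ZMod n)}

lemma twoMul_eq_coe_map : twoMul K = (K.map (AddMonoidHom.mulLeft 2) : Set (ZMod n)) := rfl

lemma twoMul_mono (hKL : K ≤ L) : twoMul K ⊆ twoMul L :=
  Set.image_mono hKL

lemma coe_subset_twoMul_of_odd_card (hH : Odd (Nat.card H)) : (H : Set (ZMod n)) ⊆ twoMul H := by
  intro g hg
  obtain ⟨c, hc⟩ := exists_two_nsmul_eq_of_odd_card hH ⟨g, hg⟩
  exact ⟨c, c.2, by simpa [two_nsmul, two_mul] using congrArg Subtype.val hc⟩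

lemma twoMul_subset : twoMul L ⊆ L := by
  rintro _ ⟨c, hc, rfl⟩
  simpa [two_mul] using L.add_mem hc hc

lemma add_mem_oddPart_iff {x h : ZMod n} (hh : h ∈ twoMul L) :
    x + h ∈ oddPart L ↔ x ∈ oddPart L := by
  have hhL : h ∈ L := twoMul_subset hh
  rw [twoMul_eq_coe_map] at hh
  simp only [oddPart, twoMul_eq_coe_map, Set.mem_sdiff, SetLike.mem_coe, L.add_mem_cancel_right hhL,
    AddSubgroup.add_mem_cancel_right _ hh]

lemma add_mem_oddPart_iff_of_odd_card (hHL : H ≤ L) (hH : Odd (Nat.card H)) {x h : ZMod n}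
    (hh : h ∈ H) : x + h ∈ oddPart L ↔ x ∈ oddPart L :=
  add_mem_oddPart_iff (twoMul_mono hHL (coe_subset_twoMul_of_odd_card hH hh))

lemma oddPart_subset_oddPart_sup (hH : Odd (Nat.card H)) : oddPart K ⊆ oddPart (K ⊔ H) := by
  rintro k ⟨hkK, hk2⟩
  refine ⟨AddSubgroup.mem_sup_left hkK, ?_⟩
  rintro ⟨y, hy, hky⟩
  obtain ⟨a, haK, b, hbH, rfl⟩ := AddSubgroup.mem_sup.mp hy
  have hKH : Odd (Nat.card (K ⊓ H : AddSubgroup (ZMod n))) :=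
    hH.of_dvd_nat (AddSubgroup.card_dvd_of_le inf_le_right)
  replace hky : 2 * (a + b) = k := hky
  have h2a : 2 * a ∈ K := twoMul_subset ⟨a, haK, rfl⟩
  have h2b : 2 * b ∈ H := twoMul_subset ⟨b, hbH, rfl⟩
  have hdiff : k - 2 * a ∈ K ⊓ H := by
    refine AddSubgroup.mem_inf.mpr ⟨K.sub_mem hkK h2a, ?_⟩
    rw [← hky, mul_add, add_sub_cancel_left]
    exact h2b
  obtain ⟨c, hc, hc2⟩ := coe_subset_twoMul_of_odd_card hKH hdiff
  replace hc2 : 2 * c = k - 2 * a := hc2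
  exact hk2 ⟨a + c, K.add_mem haK (AddSubgroup.mem_inf.mp hc).1,
    show 2 * (a + c) = k by rw [mul_add, hc2, add_sub_cancel]⟩

lemma oddPart_add_subset_oddPart_sup (hH : Odd (Nat.card H)) :
    oddPart K + (H : Set (ZMod n)) ⊆ oddPart (K ⊔ H) := by
  rintro _ ⟨k, hk, h, hh, rfl⟩
  exact (add_mem_oddPart_iff_of_odd_card le_sup_right hH hh).mpr (oddPart_subset_oddPart_sup hH hk)

theorem stmt18_general (m : ℕ) (S : Set (ZMod (2 * m)))
    (H K : AddSubgroup (ZMod (2 * m)))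
    (hHodd : Odd (Nat.card H))
    (hcond :
      (S + (H : Set (ZMod (2 * m))) ⊆ S ∪ (oddPart K + (H : Set (ZMod (2 * m)))) ∧
        (H : Set (ZMod (2 * m))) ∩ oddPart K = ∅) ∨
      ((S \ oddPart K) + (H : Set (ZMod (2 * m))) ⊆ S ∪ oddPart K)) :
    (S \ oddPart (K ⊔ H)) + (H : Set (ZMod (2 * m))) = S \ oddPart (K ⊔ H) := by
  have hKo : oddPart K ⊆ oddPart (K ⊔ H) := oddPart_subset_oddPart_sup hHodd
  have hinv : ∀ x ∉ oddPart (K ⊔ H), ∀ h ∈ (H : Set (ZMod (2 * m))), x + h ∉ oddPart (K ⊔ H) :=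
    fun _ hx _ hh => (add_mem_oddPart_iff_of_odd_card le_sup_right hHodd hh).not.mpr hx
  refine (Set.subset_add_left _ H.zero_mem).antisymm' ?_
  rcases hcond with ⟨hSH, -⟩ | hSK
  · exact Set.sdiff_add_subset_sdiff (oddPart_add_subset_oddPart_sup hHodd) hinv
      ((Set.add_subset_add_right Set.sdiff_subset).trans hSH)
  · exact Set.sdiff_add_subset_sdiff hKo hinv
      ((Set.add_subset_add_right (Set.sdiff_subset_sdiff_right hKo)).trans hSK)

theorem stmt18 (m : ℕ) (hm : 0 < m) (S : Set (ZMod (2 * m)))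
    (hS : ∀ s ∈ S, -s ∈ S) (h0 : (0 : ZMod (2 * m)) ∉ S)
    (H K : AddSubgroup (ZMod (2 * m))) (hHnt : H ≠ ⊥) (hKnt : K ≠ ⊥)
    (hKeven : Even (Nat.card K)) (hHodd : Odd (Nat.card H))
    (hcond :
      (S + (H : Set (ZMod (2 * m))) ⊆ S ∪ (oddPart K + (H : Set (ZMod (2 * m)))) ∧
        (H : Set (ZMod (2 * m))) ∩ oddPart K = ∅) ∨
      ((S \ oddPart K) + (H : Set (ZMod (2 * m))) ⊆ S ∪ oddPart K)) :
    (S \ oddPart (K ⊔ H)) + (H : Set (ZMod (2 * m))) = S \ oddPart (K ⊔ H) :=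
  stmt18_general m S H K hHodd hcond
end
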